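/- Let N and j be natural numbers with 2j ≤ N and N ≥ 1, and let t ∈ [0, 1/2]. Define s_j(t) := Σ_T (1 − 2t)^{α₁(T)} · t^{N − α₁(T)}, where the sum ranges over all semistandard Young tableaux T of shape (N − j, j) with entries in the three-letter ordered alphabet {0, 1, 2}, and α₁(T) denotes the number of entries of T equal to 0 (this is the Schur polynomial s_{(N−j,j)}(1 − 2t, t, t)). Then s_j(t) ≤ (j + 1)(1 − 2t)^{N − j} t^{j} + Σ_{k=j+1}^{N} (k + 1)² t^{k}. -/

import Mathlib

/-- The two-row Young diagram of shape `(N - j, j)` (one row if `j = 0`). -/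
def twoRowDiagram (N j : ℕ) (h : 2 * j ≤ N) : YoungDiagram :=
  YoungDiagram.ofRowLens [N - j, j] (by
    simp [List.sortedGE_iff_pairwise]
    omega)

/-- The number of entries equal to `0` in a semistandard Young tableau. -/
def numZeros {μ : YoungDiagram} (T : SemistandardYoungTableau μ) : ℕ :=
  (μ.cells.filter (fun c => T c.1 c.2 = 0)).card

/-- The Schur polynomial `s_{(N-j,j)}(1-2t, t, t)`: the sum over all semistandard Young
tableaux `T` of shape `(N-j, j)` over the three-letter ordered alphabet `{0, 1, 2}` of
`(1-2t)^{α₁(T)} t^{N-α₁(T)}`, where `α₁(T)` is the number of entries of `T` equal to `0`. -/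
noncomputable def schurSJ (N j : ℕ) (h : 2 * j ≤ N) (t : ℝ) : ℝ :=
  ∑ᶠ T : {T : SemistandardYoungTableau (twoRowDiagram N j h) // ∀ a b : ℕ, T a b ≤ 2},
    (1 - 2 * t) ^ numZeros T.1 * t ^ (N - numZeros T.1)

/-!
Column strictness puts every `0` of a tableau in the first row, and since rows weakly increase,
a row with entries in `{0, 1, 2}` is determined by how many of its entries are `≤ 0` and `≤ 1`.
So a tableau of shape `(N - j, j)` with `z` zeros is determined by the number `y ∈ [z, N - j]` of
entries `≤ 1` in its first row and the number `w ∈ [0, j]` of entries `1` in its second row: there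
are at most `(N - j + 1 - z)(j + 1)` of them, each contributing `(1 - 2t)^z t^(N - z)`.
The term `z = N - j` is the first summand of the bound; for `z < N - j` we use `(1 - 2t)^z ≤ 1`
and `(N - j + 1 - z)(j + 1) ≤ (N - z + 1)²`, and put `k = N - z`.
-/

open Finset

lemma lt_card_filter_le_iff {α : Type*} [Preorder α] [DecidableLE α] {f : ℕ → α} {L i : ℕ}
    (hf : ∀ ⦃a b⦄, a ≤ b → b < L → f a ≤ f b) (hi : i < L) (v : α) :
    i < #{k ∈ range L | f k ≤ v} ↔ f i ≤ v := by
  constructor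
  · intro hlt
    by_contra hfi
    have hsub : {k ∈ range L | f k ≤ v} ⊆ range i := fun k hk => by
      rw [mem_filter, mem_range] at hk
      rw [mem_range]
      by_contra hik
      exact hfi ((hf (not_lt.mp hik) hk.1).trans hk.2)
    exact (card_le_card hsub).not_gt (by rwa [card_range])
  · intro hfi
    have hsub : range (i + 1) ⊆ {k ∈ range L | f k ≤ v} := fun k hk => by
      rw [mem_range] at hk
      rw [mem_filter, mem_range]
      exact ⟨by omega, (hf (by omega) hi).trans hfi⟩
    simpa using card_le_card hsub

namespace SemistandardYoungTableau

variable {μ : YoungDiagram}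

lemma ext_of_mem {T T' : SemistandardYoungTableau μ}
    (h : ∀ i j, (i, j) ∈ μ → T i j = T' i j) : T = T' := by
  ext i j
  by_cases hij : (i, j) ∈ μ
  · exact h i j hij
  · rw [T.zeros hij, T'.zeros hij]

instance finite_bounded (n : ℕ) :
    Finite {T : SemistandardYoungTableau μ // ∀ a b, T a b ≤ n} :=
  Finite.of_injective
    (fun T (c : μ.cells) => (⟨T.1 c.1.1 c.1.2, Nat.lt_succ_of_le (T.2 _ _)⟩ : Fin (n + 1)))
    fun T T' hTT => Subtype.ext <| ext_of_mem fun i j hij => by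
      simpa using congrArg Fin.val (congrFun hTT ⟨(i, j), (μ.mem_cells _).mpr hij⟩)

lemma pos_of_mem (T : SemistandardYoungTableau μ) {r i : ℕ} (hr : 0 < r) (hri : (r, i) ∈ μ) :
    0 < T r i :=
  (Nat.zero_le _).trans_lt (T.col_strict hr hri)

def rowCountLE (T : SemistandardYoungTableau μ) (r v : ℕ) : ℕ :=
  #{k ∈ range (μ.rowLen r) | T r k ≤ v}

variable (T : SemistandardYoungTableau μ)

lemma rowCountLE_le_rowLen (r v : ℕ) : T.rowCountLE r v ≤ μ.rowLen r :=
  (card_filter_le _ _).trans (card_range _).le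

lemma rowCountLE_mono (r : ℕ) : Monotone (T.rowCountLE r) := fun _ _ hvw =>
  card_le_card (monotone_filter_right _ fun _ _ hk => le_trans hk hvw)

lemma lt_rowCountLE_iff {r i : ℕ} (hri : (r, i) ∈ μ) (v : ℕ) :
    i < T.rowCountLE r v ↔ T r i ≤ v :=
  lt_card_filter_le_iff (fun _ _ hab hb => T.row_weak_of_le hab (μ.mem_iff_lt_rowLen.mpr hb))
    (μ.mem_iff_lt_rowLen.mp hri) v

lemma rowCountLE_zero_of_pos {r : ℕ} (hr : 0 < r) : T.rowCountLE r 0 = 0 :=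
  card_eq_zero.mpr <| filter_eq_empty_iff.mpr fun _ hk =>
    (T.pos_of_mem hr (μ.mem_iff_lt_rowLen.mpr (mem_range.mp hk))).not_ge

lemma numZeros_eq_rowCountLE : numZeros T = T.rowCountLE 0 0 := by
  rw [numZeros, rowCountLE]
  refine (congrArg card ?_).trans (card_image_of_injective _ (Prod.mk_right_injective 0))
  ext ⟨r, i⟩
  simp only [mem_filter, YoungDiagram.mem_cells, mem_image, mem_range, Prod.mk.injEq,
    nonpos_iff_eq_zero]
  constructor
  · rintro ⟨hri, h0⟩
    obtain rfl : r = 0 := by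
      by_contra hr
      exact (T.pos_of_mem (Nat.pos_of_ne_zero hr) hri).ne' h0
    exact ⟨i, ⟨μ.mem_iff_lt_rowLen.mp hri, h0⟩, rfl, rfl⟩
  · rintro ⟨k, ⟨hk, h0⟩, rfl, rfl⟩
    exact ⟨μ.mem_iff_lt_rowLen.mpr hk, h0⟩

lemma eq_of_rowCountLE_eq {n : ℕ} {T T' : SemistandardYoungTableau μ}
    (hT : ∀ a b, T a b ≤ n) (hT' : ∀ a b, T' a b ≤ n)
    (h : ∀ r v, (r, 0) ∈ μ → v < n → T.rowCountLE r v = T'.rowCountLE r v) : T = T' := by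
  refine ext_of_mem fun r i hri => ?_
  have hr0 : (r, 0) ∈ μ := μ.up_left_mem le_rfl (Nat.zero_le i) hri
  have key : ∀ v < n, T r i ≤ v ↔ T' r i ≤ v := fun v hv => by
    rw [← T.lt_rowCountLE_iff hri, ← T'.lt_rowCountLE_iff hri, h r v hr0 hv]
  rcases lt_trichotomy (T r i) (T' r i) with hlt | heq | hgt
  · exact absurd ((key _ (hlt.trans_le (hT' r i))).mp le_rfl) hlt.not_ge
  · exact heq
  · exact absurd ((key _ (hgt.trans_le (hT r i))).mpr le_rfl) hgt.not_ge

end SemistandardYoungTableau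

section TwoRow

variable {N j : ℕ} {h : 2 * j ≤ N}

lemma lt_two_of_mem_twoRowDiagram {r i : ℕ} (hri : (r, i) ∈ twoRowDiagram N j h) : r < 2 :=
  (YoungDiagram.mem_ofRowLens.mp hri).1

lemma rowLen_twoRowDiagram_zero : (twoRowDiagram N j h).rowLen 0 = N - j :=
  YoungDiagram.rowLen_ofRowLens ⟨0, by simp⟩

lemma rowLen_twoRowDiagram_one : (twoRowDiagram N j h).rowLen 1 = j :=
  YoungDiagram.rowLen_ofRowLens ⟨1, by simp⟩

abbrev TwoRowTableau (N j : ℕ) (h : 2 * j ≤ N) : Type :=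
  {T : SemistandardYoungTableau (twoRowDiagram N j h) // ∀ a b, T a b ≤ 2}

lemma card_filter_numZeros_eq_le [Fintype (TwoRowTableau N j h)] (z : ℕ) :
    #{T : TwoRowTableau N j h | numZeros T.1 = z} ≤ (N - j + 1 - z) * (j + 1) := by
  let counts (T : TwoRowTableau N j h) : ℕ × ℕ := (T.1.rowCountLE 0 1, T.1.rowCountLE 1 1)
  calc #{T : TwoRowTableau N j h | numZeros T.1 = z}
      ≤ #(Icc z (N - j) ×ˢ range (j + 1)) := card_le_card_of_injOn counts ?maps ?inj
    _ = (N - j + 1 - z) * (j + 1) := by rw [card_product, Nat.card_Icc, card_range]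
  case maps =>
    intro T hT
    simp only [coe_filter, mem_univ, true_and, Set.mem_ofPred_eq] at hT
    have h0 := T.1.rowCountLE_le_rowLen 0 1
    have h1 := T.1.rowCountLE_le_rowLen 1 1
    rw [rowLen_twoRowDiagram_zero] at h0
    rw [rowLen_twoRowDiagram_one] at h1
    simp only [counts, coe_product, coe_Icc, coe_range, Set.mem_prod, Set.mem_Icc, Set.mem_Iio]
    refine ⟨⟨?_, h0⟩, Nat.lt_succ_of_le h1⟩
    rw [← hT, T.1.numZeros_eq_rowCountLE]
    exact T.1.rowCountLE_mono 0 zero_le_one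
  case inj =>
    intro T hT T' hT' hTT'
    simp only [coe_filter, mem_univ, true_and, Set.mem_ofPred_eq] at hT hT'
    simp only [counts, Prod.mk.injEq] at hTT'
    refine Subtype.ext (SemistandardYoungTableau.eq_of_rowCountLE_eq T.2 T'.2 fun r v hr hv => ?_)
    have hr := lt_two_of_mem_twoRowDiagram hr
    interval_cases r <;> interval_cases v
    · rw [← T.1.numZeros_eq_rowCountLE, ← T'.1.numZeros_eq_rowCountLE, hT, hT']
    · exact hTT'.1
    · rw [T.1.rowCountLE_zero_of_pos one_pos, T'.1.rowCountLE_zero_of_pos one_pos]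
    · exact hTT'.2

lemma schurSJ_le_sum {t : ℝ} (ht0 : 0 ≤ t) (ht1 : t ≤ 1 / 2) :
    schurSJ N j h t ≤ ∑ z ∈ range (N - j + 1),
      (((N - j + 1 - z) * (j + 1) : ℕ) : ℝ) * ((1 - 2 * t) ^ z * t ^ (N - z)) := by
  have := Fintype.ofFinite (TwoRowTableau N j h)
  have hmaps : ∀ T ∈ (univ : Finset (TwoRowTableau N j h)), numZeros T.1 ∈ range (N - j + 1) :=
    fun T _ => by
      rw [mem_range, Nat.lt_succ_iff, T.1.numZeros_eq_rowCountLE, ← rowLen_twoRowDiagram_zero]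
      exact T.1.rowCountLE_le_rowLen 0 0
  rw [schurSJ, finsum_eq_sum_of_fintype, ← sum_fiberwise_of_maps_to hmaps]
  gcongr with z hz
  rw [sum_congr rfl fun T hT => by rw [(mem_filter.mp hT).2], sum_const, nsmul_eq_mul]
  gcongr
  · exact mul_nonneg (pow_nonneg (by linarith) _) (pow_nonneg ht0 _)
  · exact_mod_cast card_filter_numZeros_eq_le z

end TwoRow

lemma sum_range_tsub_mul_pow_le {N j : ℕ} (hj : j ≤ N) {t : ℝ} (ht0 : 0 ≤ t) (ht1 : t ≤ 1 / 2) :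
    ∑ z ∈ range (N - j + 1),
        (((N - j + 1 - z) * (j + 1) : ℕ) : ℝ) * ((1 - 2 * t) ^ z * t ^ (N - z)) ≤
      ((j : ℝ) + 1) * (1 - 2 * t) ^ (N - j) * t ^ j +
        ∑ k ∈ Icc (j + 1) N, ((k : ℝ) + 1) ^ 2 * t ^ k := by
  have htop : (((N - j + 1 - (N - j)) * (j + 1) : ℕ) : ℝ) *
      ((1 - 2 * t) ^ (N - j) * t ^ (N - (N - j))) =
        ((j : ℝ) + 1) * (1 - 2 * t) ^ (N - j) * t ^ j := by
    rw [show N - j + 1 - (N - j) = 1 by omega, show N - (N - j) = j by omega]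
    push_cast
    ring
  have hterm : ∀ z < N - j, (((N - j + 1 - z) * (j + 1) : ℕ) : ℝ) * ((1 - 2 * t) ^ z * t ^ (N - z))
      ≤ (((N - z : ℕ) : ℝ) + 1) ^ 2 * t ^ (N - z) := fun z hz => by
    have hcoef : (N - j + 1 - z) * (j + 1) ≤ (N - z + 1) ^ 2 := by
      rw [sq]
      exact Nat.mul_le_mul (by omega) (by omega)
    have hweight : (1 - 2 * t) ^ z * t ^ (N - z) ≤ t ^ (N - z) :=
      mul_le_of_le_one_left (pow_nonneg ht0 _) (pow_le_one₀ (by linarith) (by linarith))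
    calc _ ≤ (((N - j + 1 - z) * (j + 1) : ℕ) : ℝ) * t ^ (N - z) := by gcongr
      _ ≤ _ := by gcongr; exact_mod_cast hcoef
  have hreflect : ∑ z ∈ range (N - j), (((N - z : ℕ) : ℝ) + 1) ^ 2 * t ^ (N - z)
      = ∑ k ∈ Icc (j + 1) N, ((k : ℝ) + 1) ^ 2 * t ^ k := by
    rw [range_eq_Ico, sum_Ico_reflect (fun k => ((k : ℝ) + 1) ^ 2 * t ^ k) 0 (by omega),
      show N + 1 - (N - j) = j + 1 by omega, Nat.sub_zero, Ico_add_one_right_eq_Icc]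
  rw [sum_range_succ, htop, ← hreflect]
  linarith [sum_le_sum fun z hz => hterm z (mem_range.mp hz)]

theorem stmt6_general (N j : ℕ) (h2j : 2 * j ≤ N) (t : ℝ)
    (ht0 : 0 ≤ t) (ht1 : t ≤ 1 / 2) :
    schurSJ N j h2j t ≤
      ((j : ℝ) + 1) * (1 - 2 * t) ^ (N - j) * t ^ j +
        ∑ k ∈ Finset.Icc (j + 1) N, ((k : ℝ) + 1) ^ 2 * t ^ k :=
  (schurSJ_le_sum ht0 ht1).trans (sum_range_tsub_mul_pow_le (by omega) ht0 ht1)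

/-- Upper bound on the Schur polynomial `s_j(t) = s_{(N-j,j)}(1-2t, t, t)`:
`s_j(t) ≤ (j+1)(1-2t)^{N-j} t^j + Σ_{k=j+1}^N (k+1)² t^k`. -/
theorem stmt6 (N j : ℕ) (hN : 1 ≤ N) (h2j : 2 * j ≤ N) (t : ℝ)
    (ht0 : 0 ≤ t) (ht1 : t ≤ 1 / 2) :
    schurSJ N j h2j t ≤
      ((j : ℝ) + 1) * (1 - 2 * t) ^ (N - j) * t ^ j +
        ∑ k ∈ Finset.Icc (j + 1) N, ((k : ℝ) + 1) ^ 2 * t ^ k :=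
  stmt6_general N j h2j t ht0 ht1
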